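/- arXiv:1203.6792 — 2 statements merged into one kernel-verified Lean document; each statement's English description precedes it below -/
import Mathlib

section
/- For every Motzkin path γ of length n, the number of Motzkin paths of length n that cover γ in the Motzkin lattice M_n equals ω_HU(γ) + ω_DH(γ) + ω_DU(γ) + ω_HH(γ), and the number of Motzkin paths of length n covered by γ equals ω_UH(γ) + ω_HD(γ) + ω_UD(γ) + ω*_HH(γ), where ω_XY(γ) is the number of occurrences of the factor XY in γ and ω*_HH(γ) is the number of occurrences of HH whose height is at least 1. -/
/-- Steps of a (Grand) Motzkin path: up `U = (1,1)`, down `D = (1,-1)`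
and horizontal `H = (1,0)`. -/
inductive Step : Type
  | U : Step
  | D : Step
  | H : Step
  deriving DecidableEq

/-- The height of a path: number of up steps minus number of down steps. -/
def height (w : List Step) : ℤ := (w.count Step.U : ℤ) - (w.count Step.D : ℤ)

/-- A Motzkin path of length `n`: a word of length `n` with equally many up and down
steps, all of whose prefixes have nonnegative height. -/
def IsMotzkin (n : ℕ) (w : List Step) : Prop :=
  w.length = n ∧ w.count Step.U = w.count Step.D ∧ ∀ i : ℕ, 0 ≤ height (w.take i)

/-- A Grand Motzkin path of length `n`: a word of length `n` with equally many up
and down steps. -/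
def IsGrandMotzkin (n : ℕ) (w : List Step) : Prop :=
  w.length = n ∧ w.count Step.U = w.count Step.D

/-- The order on paths: pointwise comparison of the heights after each number of steps. -/
def PathLe (w w' : List Step) : Prop :=
  ∀ i : ℕ, height (w.take i) ≤ height (w'.take i)

/-- Strict order on paths. -/
def PathLt (w w' : List Step) : Prop := PathLe w w' ∧ ¬ PathLe w' w

/-- `Covers P w w'` : within the class of paths satisfying `P`, the path `w'` covers `w`,
i.e. `w < w'` and no path of the class lies strictly between them. -/
def Covers (P : List Step → Prop) (w w' : List Step) : Prop :=
  P w ∧ P w' ∧ PathLt w w' ∧ ∀ z : List Step, P z → ¬ (PathLt w z ∧ PathLt z w')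

/-- Number of occurrences of the factor `xy` in the word `w`. -/
def countFactor (x y : Step) (w : List Step) : ℕ :=
  ((Finset.range w.length).filter
    (fun i => w[i]? = some x ∧ w[i + 1]? = some y)).card

/-- Number of occurrences of the factor `xy` in the word `w` whose height
(the height after the first `i` steps, the factor occupying positions `i` and `i+1`,
`0`-indexed) is at least `1`. -/
def countFactorHigh (x y : Step) (w : List Step) : ℕ :=
  ((Finset.range w.length).filter
    (fun i => w[i]? = some x ∧ w[i + 1]? = some y ∧ 1 ≤ height (w.take i))).card

/-- The number of edges of the Hasse diagram of the Motzkin lattice `M_n`,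
i.e. the number of covering pairs of Motzkin paths of length `n`. -/
noncomputable def motzkinEdges (n : ℕ) : ℕ :=
  Nat.card {p : List Step × List Step // Covers (IsMotzkin n) p.1 p.2}

/-- The number of edges of the Hasse diagram of the Grand Motzkin lattice `GM_n`. -/
noncomputable def grandMotzkinEdges (n : ℕ) : ℕ :=
  Nat.card {p : List Step × List Step // Covers (IsGrandMotzkin n) p.1 p.2}

/-- The `n`-th Motzkin number: the number of Motzkin paths of length `n`. -/
noncomputable def motzkinNum (n : ℕ) : ℕ :=
  Nat.card {w : List Step // IsMotzkin n w}

/-- The `n`-th central trinomial coefficient: the coefficient of `x^n` in `(1+x+x²)^n`. -/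
noncomputable def centralTrinomial (n : ℕ) : ℕ :=
  (((1 : Polynomial ℕ) + Polynomial.X + Polynomial.X ^ 2) ^ n).coeff n

/-!
A path is encoded by its height profile `k ↦ height (w.take k)`; the profiles of Motzkin paths
of length `n` are the functions `ℕ → ℤ` with steps in `{-1, 0, 1}` that vanish at `0` and from
`n` on and are nonnegative, and the order of `M_n` is the pointwise order of profiles.
If `f < g` are two such profiles, a point `j` with `f j < g j` at which `f j` is least is a local
minimum of `f`, so raising `f` by one at `j` gives a Motzkin profile that still lies below `g`.
Hence `g` covers `f` exactly when `g = f + δ_j`. The paths covering `γ` thus correspond to the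
interior local minima of its profile, i.e. the factors `HU`, `DH`, `DU`, `HH`, and the paths
covered by `γ` to its interior local maxima of positive height, i.e. the factors `UH`, `HD`,
`UD`, and `HH` at positive height.
-/

open Finset

lemma Pi.single_left_injective {α M : Type*} [DecidableEq α] [Zero M] {m : M} (hm : m ≠ 0) :
    Function.Injective fun j : α => Pi.single j m := by
  intro j j' h
  by_contra hne
  simpa [Pi.single_apply, hne, hm] using congrFun h j

def HasUnitSteps (f : ℕ → ℤ) : Prop := ∀ k, |f (k + 1) - f k| ≤ 1

lemma eq_or_eq_add_single_of_le_of_le {α : Type*} [DecidableEq α] {f g : α → ℤ} {j : α}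
    (h₁ : f ≤ g) (h₂ : g ≤ f + Pi.single j 1) : g = f ∨ g = f + Pi.single j 1 := by
  have off : ∀ k, k ≠ j → g k = f k := fun k hk =>
    le_antisymm (by simpa [Pi.single_apply, hk] using h₂ k) (h₁ k)
  have hj : g j ≤ f j + 1 := by simpa using h₂ j
  rcases (show f j ≤ g j from h₁ j).eq_or_lt with h | h
  · left; ext k
    by_cases hk : k = j
    · rw [hk, h]
    · exact off k hk
  · right; ext k
    by_cases hk : k = j
    · rw [hk, Pi.add_apply, Pi.single_eq_same]; omega
    · simp [off k hk, hk]

lemma exists_localMin_lt {f g : ℕ → ℤ} (hg : HasUnitSteps g) (h0 : f 0 = g 0)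
    (hfin : {j | f j < g j}.Finite) (hlt : ∃ j, f j < g j) :
    ∃ i, f (i + 1) < g (i + 1) ∧ f (i + 1) ≤ f i ∧ f (i + 1) ≤ f (i + 2) := by
  obtain ⟨j, hj : f j < g j, hmin⟩ := Set.exists_min_image _ f hfin hlt
  obtain ⟨i, rfl⟩ : ∃ i, j = i + 1 :=
    Nat.exists_eq_succ_of_ne_zero (by rintro rfl; exact hj.ne h0)
  have hgi := abs_le.mp (hg i)
  have hgi' := abs_le.mp (show |g (i + 2) - g (i + 1)| ≤ 1 from hg (i + 1))
  refine ⟨i, hj, ?_, ?_⟩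
  · by_contra h
    exact h (hmin i (show f i < g i by omega))
  · by_contra h
    exact h (hmin (i + 2) (show f (i + 2) < g (i + 2) by omega))

lemma hasUnitSteps_add_single_iff {f : ℕ → ℤ} (hf : HasUnitSteps f) (i : ℕ) :
    HasUnitSteps (f + Pi.single (i + 1) 1) ↔ f (i + 1) ≤ f i ∧ f (i + 1) ≤ f (i + 2) := by
  change _ ↔ f (i + 1) ≤ f i ∧ f (i + 1) ≤ f (i + 1 + 1)
  constructor
  · intro h
    have h1 := abs_le.mp (h i)
    have h2 := abs_le.mp (h (i + 1))
    simp only [Pi.add_apply, Pi.single_apply, if_pos, add_eq_left, one_ne_zero, if_false] at h1 h2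
    omega
  · rintro ⟨h1, h2⟩ k
    have := abs_le.mp (hf k)
    rw [abs_le]
    simp only [Pi.add_apply, Pi.single_apply, add_left_inj]
    split_ifs <;> subst_vars <;> omega

lemma hasUnitSteps_neg {f : ℕ → ℤ} : HasUnitSteps (-f) ↔ HasUnitSteps f := by
  simp only [HasUnitSteps, Pi.neg_apply, ← neg_sub', abs_neg]

lemma hasUnitSteps_sub_single_iff {f : ℕ → ℤ} (hf : HasUnitSteps f) (i : ℕ) :
    HasUnitSteps (f - Pi.single (i + 1) 1) ↔ f i ≤ f (i + 1) ∧ f (i + 2) ≤ f (i + 1) := by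
  rw [← hasUnitSteps_neg, neg_sub, sub_eq_neg_add,
    hasUnitSteps_add_single_iff (hasUnitSteps_neg.mpr hf)]
  simp only [Pi.neg_apply, neg_le_neg_iff]

namespace Step

def value : Step → ℤ
  | U => 1
  | D => -1
  | H => 0

lemma value_injective : Function.Injective value := by
  intro x y; cases x <;> cases y <;> simp [value]

lemma abs_value_le_one (x : Step) : |x.value| ≤ 1 := by
  cases x <;> simp [value]

def ofValue (d : ℤ) : Step :=
  if d = 1 then U else if d = -1 then D else H

lemma value_ofValue {d : ℤ} (hd : |d| ≤ 1) : (ofValue d).value = d := by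
  rw [abs_le] at hd
  unfold ofValue
  split_ifs <;> simp only [value] <;> omega

instance : Fintype Step := ⟨{U, D, H}, fun x => by cases x <;> simp⟩

lemma sum_univ {M : Type*} [AddCommMonoid M] (f : Step → M) : ∑ x, f x = f U + f D + f H := by
  simp [Finset.univ, Fintype.elems, add_assoc]

end Step

lemma height_append (a b : List Step) : height (a ++ b) = height a + height b := by
  simp only [height, List.count_append]; push_cast; ring

lemma height_singleton (x : Step) : height [x] = x.value := by
  cases x <;> rfl

def profile (w : List Step) (k : ℕ) : ℤ := height (w.take k)

lemma profile_zero (w : List Step) : profile w 0 = 0 := rfl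

lemma profile_succ_of_getElem?_eq_some {w : List Step} {k : ℕ} {x : Step} (h : w[k]? = some x) :
    profile w (k + 1) = profile w k + x.value := by
  rw [profile, List.take_add_one, h, height_append, Option.toList_some, height_singleton, profile]

lemma profile_of_length_le {w : List Step} {k : ℕ} (h : w.length ≤ k) : profile w k = height w := by
  rw [profile, List.take_of_length_le h]

lemma hasUnitSteps_profile (w : List Step) : HasUnitSteps (profile w) := by
  intro k
  cases h : w[k]? with
  | none =>
    have hk : w.length ≤ k := List.getElem?_eq_none_iff.mp h
    rw [profile_of_length_le hk, profile_of_length_le (by omega)]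
    simp
  | some x =>
    rw [profile_succ_of_getElem?_eq_some h, add_sub_cancel_left]
    exact x.abs_value_le_one

lemma eq_of_profile_eq {w w' : List Step} (hl : w.length = w'.length)
    (h : profile w = profile w') : w = w' := by
  refine List.ext_getElem hl fun k hk hk' => Step.value_injective ?_
  have e := profile_succ_of_getElem?_eq_some (List.getElem?_eq_getElem hk)
  have e' := profile_succ_of_getElem?_eq_some (List.getElem?_eq_getElem hk')
  rw [h] at e
  linarith

lemma exists_profile_eq {f : ℕ → ℤ} {n : ℕ} (h0 : f 0 = 0) (hf : HasUnitSteps f)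
    (hconst : ∀ k, n ≤ k → f k = f n) : ∃ w : List Step, w.length = n ∧ profile w = f := by
  set w := List.ofFn fun k : Fin n => Step.ofValue (f (k + 1) - f k)
  have hw : w.length = n := List.length_ofFn
  have hle : ∀ k ≤ n, profile w k = f k := by
    intro k
    induction k with
    | zero => simp [profile_zero, h0]
    | succ k ih =>
      intro hk
      have hwk : w[k]? = some (Step.ofValue (f (k + 1) - f k)) := by simp [w, show k < n by omega]
      rw [profile_succ_of_getElem?_eq_some hwk, ih (by omega), Step.value_ofValue (hf k)]
      ring
  refine ⟨w, hw, funext fun k => ?_⟩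
  rcases le_total k n with hk | hk
  · exact hle k hk
  · rw [profile_of_length_le (hw ▸ hk), hconst k hk, ← hle n le_rfl,
      profile_of_length_le hw.le]

structure IsMotzkinProfile (n : ℕ) (f : ℕ → ℤ) : Prop where
  map_zero : f 0 = 0
  hasUnitSteps : HasUnitSteps f
  eq_zero_of_le : ∀ k, n ≤ k → f k = 0
  nonneg : 0 ≤ f

lemma isMotzkin_iff_profile {n : ℕ} {w : List Step} :
    IsMotzkin n w ↔ w.length = n ∧ IsMotzkinProfile n (profile w) := by
  have hheight : height w = 0 ↔ w.count Step.U = w.count Step.D := by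
    rw [height]; omega
  constructor
  · rintro ⟨hl, hcount, hnonneg⟩
    refine ⟨hl, profile_zero w, hasUnitSteps_profile w, fun k hk => ?_, hnonneg⟩
    rw [profile_of_length_le (hl ▸ hk), hheight, hcount]
  · rintro ⟨hl, hw⟩
    refine ⟨hl, hheight.mp ?_, hw.nonneg⟩
    rw [← profile_of_length_le hl.le, hw.eq_zero_of_le n le_rfl]

lemma IsMotzkinProfile.exists_isMotzkin {n : ℕ} {f : ℕ → ℤ} (hf : IsMotzkinProfile n f) :
    ∃ w, IsMotzkin n w ∧ profile w = f := by
  obtain ⟨w, hl, hw⟩ := exists_profile_eq hf.map_zero hf.hasUnitSteps fun k hk => by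
    rw [hf.eq_zero_of_le k hk, hf.eq_zero_of_le n le_rfl]
  exact ⟨w, isMotzkin_iff_profile.mpr ⟨hl, hw ▸ hf⟩, hw⟩

lemma IsMotzkinProfile.exists_eq_succ_lt {n : ℕ} {f g : ℕ → ℤ} (hf : IsMotzkinProfile n f)
    (hg : IsMotzkinProfile n g) {j : ℕ} (hj : f j ≠ g j) : ∃ i, j = i + 1 ∧ i + 1 < n := by
  obtain ⟨i, rfl⟩ : ∃ i, j = i + 1 :=
    Nat.exists_eq_succ_of_ne_zero fun h => hj (by rw [h, hf.map_zero, hg.map_zero])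
  refine ⟨i, rfl, lt_of_not_ge fun hn => hj ?_⟩
  rw [hf.eq_zero_of_le _ hn, hg.eq_zero_of_le _ hn]

lemma IsMotzkinProfile.add_single_iff {n : ℕ} {f : ℕ → ℤ} (hf : IsMotzkinProfile n f) {j : ℕ} :
    IsMotzkinProfile n (f + Pi.single j 1) ↔
      ∃ i, j = i + 1 ∧ i + 1 < n ∧ f (i + 1) ≤ f i ∧ f (i + 1) ≤ f (i + 2) := by
  constructor
  · intro h
    obtain ⟨i, rfl, hi⟩ := hf.exists_eq_succ_lt h (j := j) (by simp)
    exact ⟨i, rfl, hi, (hasUnitSteps_add_single_iff hf.hasUnitSteps i).mp h.hasUnitSteps⟩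
  · rintro ⟨i, rfl, hi, hmin⟩
    refine ⟨by simpa using hf.map_zero, (hasUnitSteps_add_single_iff hf.hasUnitSteps i).mpr hmin,
      fun k hk => ?_, fun k => ?_⟩
    · simp [hf.eq_zero_of_le k hk, show k ≠ i + 1 by omega]
    · have : 0 ≤ f k := hf.nonneg k
      simp only [Pi.add_apply, Pi.zero_apply, Pi.single_apply]
      split_ifs <;> omega

lemma IsMotzkinProfile.sub_single_iff {n : ℕ} {f : ℕ → ℤ} (hf : IsMotzkinProfile n f) {j : ℕ} :
    IsMotzkinProfile n (f - Pi.single j 1) ↔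
      ∃ i, j = i + 1 ∧ i + 1 < n ∧ 1 ≤ f (i + 1) ∧ f i ≤ f (i + 1) ∧ f (i + 2) ≤ f (i + 1) := by
  constructor
  · intro h
    obtain ⟨i, rfl, hi⟩ := hf.exists_eq_succ_lt h (j := j) (by simp; omega)
    exact ⟨i, rfl, hi, by simpa [sub_nonneg] using h.nonneg (i + 1),
      (hasUnitSteps_sub_single_iff hf.hasUnitSteps i).mp h.hasUnitSteps⟩
  · rintro ⟨i, rfl, hi, hpos, hmax⟩
    refine ⟨by simpa using hf.map_zero, (hasUnitSteps_sub_single_iff hf.hasUnitSteps i).mpr hmax,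
      fun k hk => ?_, fun k => ?_⟩
    · simp [hf.eq_zero_of_le k hk, show k ≠ i + 1 by omega]
    · have : 0 ≤ f k := hf.nonneg k
      simp only [Pi.sub_apply, Pi.zero_apply, Pi.single_apply]
      split_ifs <;> subst_vars <;> omega

lemma IsMotzkinProfile.exists_add_single_le {n : ℕ} {f g : ℕ → ℤ} (hf : IsMotzkinProfile n f)
    (hg : IsMotzkinProfile n g) (hlt : f < g) :
    ∃ j, IsMotzkinProfile n (f + Pi.single j 1) ∧ f + Pi.single j 1 ≤ g := by
  obtain ⟨hle, hne⟩ := Pi.lt_def.mp hlt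
  have hfin : {j | f j < g j}.Finite := (Set.finite_Iio n).subset fun j (hj : f j < g j) =>
    lt_of_not_ge fun hn => hj.ne (by rw [hf.eq_zero_of_le j hn, hg.eq_zero_of_le j hn])
  obtain ⟨i, hi, hmin⟩ :=
    exists_localMin_lt hg.hasUnitSteps (hf.map_zero.trans hg.map_zero.symm) hfin hne
  have hin : i + 1 < n := by
    obtain ⟨_, hj, hjn⟩ := hf.exists_eq_succ_lt hg hi.ne
    omega
  refine ⟨i + 1, hf.add_single_iff.mpr ⟨i, rfl, hin, hmin⟩, fun k => ?_⟩
  have : f k ≤ g k := hle k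
  simp only [Pi.add_apply, Pi.single_apply]
  split_ifs with hk
  · subst hk; omega
  · omega

lemma pathLt_iff_profile_lt {w w' : List Step} : PathLt w w' ↔ profile w < profile w' := Iff.rfl

lemma covers_isMotzkin_iff {n : ℕ} {a b : List Step} :
    Covers (IsMotzkin n) a b ↔
      IsMotzkin n a ∧ IsMotzkin n b ∧ ∃ j, profile b = profile a + Pi.single j 1 := by
  have lt_add_single (f : ℕ → ℤ) (j : ℕ) : f < f + Pi.single j 1 :=
    lt_add_of_pos_right f (Pi.single_pos.mpr one_pos)
  simp only [Covers, pathLt_iff_profile_lt]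
  constructor
  · rintro ⟨ha, hb, hab, hmin⟩
    obtain ⟨j, hz, hzb⟩ := (isMotzkin_iff_profile.mp ha).2.exists_add_single_le
      (isMotzkin_iff_profile.mp hb).2 hab
    obtain ⟨z, hzM, hpz⟩ := hz.exists_isMotzkin
    refine ⟨ha, hb, j, le_antisymm ?_ hzb⟩
    by_contra hbz
    exact hmin z hzM ⟨hpz ▸ lt_add_single _ j, hpz ▸ lt_of_le_not_ge hzb hbz⟩
  · rintro ⟨ha, hb, j, hj⟩
    refine ⟨ha, hb, hj ▸ lt_add_single _ j, fun z _ ⟨haz, hzb⟩ => ?_⟩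
    rcases eq_or_eq_add_single_of_le_of_le haz.le (hj ▸ hzb.le) with h | h
    · exact haz.ne h.symm
    · exact hzb.ne (h.trans hj.symm)

lemma card_isMotzkin_profile_eq {n : ℕ} {F : ℕ → ℕ → ℤ} (hF : F.Injective) :
    Nat.card {w // IsMotzkin n w ∧ ∃ j, profile w = F j} =
      {j | IsMotzkinProfile n (F j)}.ncard := by
  have hinj : Set.InjOn profile {w | IsMotzkin n w ∧ ∃ j, profile w = F j} :=
    fun w hw w' hw' h => eq_of_profile_eq (hw.1.1.trans hw'.1.1.symm) h
  change Nat.card ({w | IsMotzkin n w ∧ ∃ j, profile w = F j} : Set (List Step)) = _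
  rw [Nat.card_coe_set_eq, ← hinj.ncard_image, ← Set.ncard_image_of_injective _ hF]
  congr 1
  ext f
  simp only [Set.mem_image, Set.mem_ofPred_eq]
  constructor
  · rintro ⟨w, ⟨hw, j, hj⟩, rfl⟩
    exact ⟨j, hj ▸ (isMotzkin_iff_profile.mp hw).2, hj.symm⟩
  · rintro ⟨j, hj, rfl⟩
    obtain ⟨w, hw, hpw⟩ := hj.exists_isMotzkin
    exact ⟨w, ⟨hw, j, hpw⟩, hpw⟩

lemma card_covers_eq_ncard {n : ℕ} {γ : List Step} (hγ : IsMotzkin n γ) :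
    Nat.card {w // Covers (IsMotzkin n) γ w} =
      {j | IsMotzkinProfile n (profile γ + Pi.single j 1)}.ncard := by
  simp only [covers_isMotzkin_iff, hγ, true_and]
  exact card_isMotzkin_profile_eq
    ((add_right_injective _).comp (Pi.single_left_injective one_ne_zero))

lemma card_covered_eq_ncard {n : ℕ} {γ : List Step} (hγ : IsMotzkin n γ) :
    Nat.card {w // Covers (IsMotzkin n) w γ} =
      {j | IsMotzkinProfile n (profile γ - Pi.single j 1)}.ncard := by
  have h (w : List Step) (j : ℕ) :
      profile γ = profile w + Pi.single j 1 ↔ profile w = profile γ - Pi.single j 1 := by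
    rw [eq_sub_iff_add_eq, eq_comm]
  simp only [covers_isMotzkin_iff, hγ, true_and, h]
  exact card_isMotzkin_profile_eq
    ((sub_right_injective (b := profile γ)).comp (Pi.single_left_injective one_ne_zero))

lemma ncard_setOf_exists_eq_succ {n : ℕ} {R : ℕ → Prop} [DecidablePred R] :
    {j | ∃ i, j = i + 1 ∧ i + 1 < n ∧ R i}.ncard = #{i ∈ range n | i + 1 < n ∧ R i} := by
  have : {j | ∃ i, j = i + 1 ∧ i + 1 < n ∧ R i} =
      (· + 1) '' ↑({i ∈ range n | i + 1 < n ∧ R i}) := by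
    ext j
    simp only [Set.mem_ofPred_eq, Set.mem_image, coe_filter, mem_range]
    exact ⟨fun ⟨i, hj, hi⟩ => ⟨i, ⟨by omega, hi⟩, hj.symm⟩,
      fun ⟨i, ⟨_, hi⟩, hj⟩ => ⟨i, hj.symm, hi⟩⟩
  rw [this, Set.ncard_image_of_injective _ (add_left_injective 1), Set.ncard_coe_finset]

lemma exists_factor_iff {w : List Step} {i : ℕ} {P : ℤ → ℤ → Prop} :
    (∃ x y, w[i]? = some x ∧ w[i + 1]? = some y ∧ P x.value y.value) ↔
      i + 1 < w.length ∧
        P (profile w (i + 1) - profile w i) (profile w (i + 2) - profile w (i + 1)) := by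
  change _ ↔ _ ∧ P _ (profile w (i + 1 + 1) - _)
  constructor
  · rintro ⟨x, y, hx, hy, hP⟩
    refine ⟨(List.getElem?_eq_some_iff.mp hy).1, ?_⟩
    rwa [profile_succ_of_getElem?_eq_some hy, profile_succ_of_getElem?_eq_some hx,
      add_sub_cancel_left, add_sub_cancel_left]
  · rintro ⟨hi, hP⟩
    have hx := List.getElem?_eq_getElem (l := w) (i := i) (by omega)
    have hy := List.getElem?_eq_getElem hi
    refine ⟨_, _, hx, hy, ?_⟩
    rwa [profile_succ_of_getElem?_eq_some hy, profile_succ_of_getElem?_eq_some hx,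
      add_sub_cancel_left, add_sub_cancel_left] at hP

lemma card_filter_exists_factor (w : List Step) (R : Step → Step → ℕ → Prop)
    [∀ x y, DecidablePred (R x y)] :
    #{i ∈ range w.length | ∃ x y, w[i]? = some x ∧ w[i + 1]? = some y ∧ R x y i} =
      ∑ x, ∑ y, #{i ∈ range w.length | w[i]? = some x ∧ w[i + 1]? = some y ∧ R x y i} := by
  rw [← Fintype.sum_prod_type', ← card_biUnion]
  · congr 1
    ext i
    simp
  · rintro ⟨x, y⟩ - ⟨x', y'⟩ - hne
    simp only [Function.onFun, disjoint_left, mem_filter]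
    rintro i ⟨-, hx, hy, -⟩ ⟨-, hx', hy', -⟩
    exact hne (Prod.ext (Option.some_injective _ (hx.symm.trans hx'))
      (Option.some_injective _ (hy.symm.trans hy')))

lemma card_covers_eq_card_filter {n : ℕ} {γ : List Step} (hγ : IsMotzkin n γ) :
    Nat.card {w // Covers (IsMotzkin n) γ w} =
      #{i ∈ range γ.length |
        ∃ x y, γ[i]? = some x ∧ γ[i + 1]? = some y ∧ x.value ≤ 0 ∧ 0 ≤ y.value} := by
  obtain ⟨hl, hp⟩ := isMotzkin_iff_profile.mp hγ
  simp_rw [card_covers_eq_ncard hγ, hp.add_single_iff]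
  rw [ncard_setOf_exists_eq_succ, hl]
  congr 1
  refine filter_congr fun i _ => ?_
  rw [exists_factor_iff (P := fun a b => a ≤ 0 ∧ 0 ≤ b), hl, sub_nonpos, sub_nonneg]

lemma one_le_profile_succ_iff {w : List Step} (hw : 0 ≤ profile w) {i : ℕ} {x y : Step}
    (hx : w[i]? = some x) (hy : w[i + 1]? = some y) (hxv : 0 ≤ x.value) :
    1 ≤ profile w (i + 1) ↔ x = Step.U ∨ y = Step.D ∨ 1 ≤ profile w i := by
  have hpos : 0 ≤ profile w (i + 1 + 1) := hw _
  have hpos' : 0 ≤ profile w i := hw i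
  rw [profile_succ_of_getElem?_eq_some hy, profile_succ_of_getElem?_eq_some hx] at hpos
  rw [profile_succ_of_getElem?_eq_some hx]
  cases x <;> cases y <;> simp [Step.value] at hxv hpos ⊢ <;> omega

lemma card_covered_eq_card_filter {n : ℕ} {γ : List Step} (hγ : IsMotzkin n γ) :
    Nat.card {w // Covers (IsMotzkin n) w γ} =
      #{i ∈ range γ.length | ∃ x y, γ[i]? = some x ∧ γ[i + 1]? = some y ∧
        0 ≤ x.value ∧ y.value ≤ 0 ∧ (x = Step.U ∨ y = Step.D ∨ 1 ≤ height (γ.take i))} := by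
  obtain ⟨hl, hp⟩ := isMotzkin_iff_profile.mp hγ
  simp_rw [card_covered_eq_ncard hγ, hp.sub_single_iff]
  rw [ncard_setOf_exists_eq_succ, hl]
  congr 1
  refine filter_congr fun i _ => ?_
  have hfactor := exists_factor_iff (w := γ) (i := i) (P := fun a b => 0 ≤ a ∧ b ≤ 0)
  simp only [hl, sub_nonneg, sub_nonpos] at hfactor
  constructor
  · rintro ⟨hi, hpos, hmax⟩
    obtain ⟨x, y, hx, hy, hxv, hyv⟩ := hfactor.mpr ⟨hi, hmax⟩
    exact ⟨x, y, hx, hy, hxv, hyv, (one_le_profile_succ_iff hp.nonneg hx hy hxv).mp hpos⟩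
  · rintro ⟨x, y, hx, hy, hxv, hyv, hh⟩
    obtain ⟨hi, hmax⟩ := hfactor.mp ⟨x, y, hx, hy, hxv, hyv⟩
    exact ⟨hi, (one_le_profile_succ_iff hp.nonneg hx hy hxv).mpr hh, hmax⟩

/-- In the Motzkin lattice `M_n`, the number of paths covering a Motzkin path `γ` equals
`ω_HU(γ) + ω_DH(γ) + ω_DU(γ) + ω_HH(γ)`, and the number of paths covered by `γ` equals
`ω_UH(γ) + ω_HD(γ) + ω_UD(γ) + ω*_HH(γ)`, where `ω_XY` counts occurrences of the factor
`XY` and `ω*_HH` counts occurrences of `HH` at height at least `1`. -/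
theorem motzkin_delta_nabla (n : ℕ) (γ : List Step) (hγ : IsMotzkin n γ) :
    Nat.card {w : List Step // Covers (IsMotzkin n) γ w} =
      countFactor Step.H Step.U γ + countFactor Step.D Step.H γ +
        countFactor Step.D Step.U γ + countFactor Step.H Step.H γ ∧
    Nat.card {w : List Step // Covers (IsMotzkin n) w γ} =
      countFactor Step.U Step.H γ + countFactor Step.H Step.D γ +
        countFactor Step.U Step.D γ + countFactorHigh Step.H Step.H γ := by
  constructor
  · rw [card_covers_eq_card_filter hγ, card_filter_exists_factor]
    simp only [Step.sum_univ, Step.value, countFactor, Int.reduceNeg, Int.reduceLE, le_refl,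
      zero_le_one, Int.neg_nonneg, Left.neg_nonpos_iff, and_true, and_false, filter_false,
      card_empty, add_zero, zero_add]
    ring
  · rw [card_covered_eq_card_filter hγ, card_filter_exists_factor]
    simp only [Step.sum_univ, Step.value, countFactor, countFactorHigh, Int.reduceNeg,
      Int.reduceLE, le_refl, zero_le_one, Int.neg_nonneg, Left.neg_nonpos_iff, reduceCtorEq,
      true_or, or_true, false_or, and_self, true_and, and_true, false_and, and_false,
      filter_false, card_empty, add_zero, zero_add]
    ring
end

section
/- For every natural number n ≥ 3, the number ℓ(M_n) of covering pairs in the Motzkin lattice M_n equals the coefficient of x^{n−2} in (1+x+x^2)^n plus the coefficient of x^{n−3} in (1+x+x^2)^{n−1}. -/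
theorem ncard_setOf_snd_mem_eq_sum {ι α : Type*} [Fintype ι] (s : ι → Set α)
    (hs : ∀ i, (s i).Finite) : {q : ι × α | q.2 ∈ s q.1}.ncard = ∑ i, (s i).ncard := by
  have : {q : ι × α | q.2 ∈ s q.1} = ⋃ i, {i} ×ˢ s i := by ext ⟨i, a⟩; simp
  rw [this, Set.ncard_iUnion_of_finite (fun i => (Set.finite_singleton i).prod (hs i)),
    finsum_eq_sum_of_fintype]
  · simp [Set.ncard_prod]
  · intro i j hij
    simp only [Function.onFun, Set.disjoint_left, Set.mem_prod, Set.mem_singleton_iff]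
    exact fun q hq hq' => hij (hq.1.symm.trans hq'.1)

theorem exists_lt_forall_le_of_lt {f g : ℕ → ℤ} (hf : ∀ i, 0 ≤ f i) (hfg : ∀ i, f i ≤ g i)
    (hlt : ∃ i, f i < g i) : ∃ i, f i < g i ∧ ∀ j, g i ≤ g j + 1 → f i ≤ f j := by
  obtain ⟨_, ⟨i, hi, rfl⟩, hmin⟩ :=
    Int.exists_least_of_bdd (P := fun m => ∃ i, f i < g i ∧ f i = m)
      ⟨0, fun _ ⟨i, _, h⟩ => h ▸ hf i⟩ (let ⟨i, hi⟩ := hlt; ⟨f i, i, hi, rfl⟩)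
  refine ⟨i, hi, fun j hj => ?_⟩
  rcases (hfg j).lt_or_eq with hj' | hj'
  · exact hmin _ ⟨j, hj', rfl⟩
  · omega

def IsFirstMin (f : ℕ → ℤ) (k : ℕ) : Prop :=
  (∀ i, f k ≤ f i) ∧ ∀ i < k, f k < f i

theorem IsFirstMin.unique {f : ℕ → ℤ} {k k' : ℕ} (h : IsFirstMin f k) (h' : IsFirstMin f k') :
    k = k' := by
  by_contra hne
  rcases Nat.lt_or_gt_of_ne hne with hlt | hlt
  · exact absurd (h.1 k') (not_le.2 (h'.2 k hlt))
  · exact absurd (h'.1 k) (not_le.2 (h.2 k' hlt))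

theorem exists_isFirstMin {f : ℕ → ℤ} (N : ℕ) (hN : ∀ i, N ≤ i → f i = f N) :
    ∃ k, IsFirstMin f k := by
  classical
  obtain ⟨m, -, hm⟩ := (Finset.range (N + 1)).exists_min_image f ⟨0, by simp⟩
  have hmin : ∀ i, f m ≤ f i := fun i => by
    rcases le_or_gt i N with hi | hi
    · exact hm i (by simp; omega)
    · rw [hN i hi.le]; exact hm N (by simp)
  have hex : ∃ k, f k = f m := ⟨m, rfl⟩
  refine ⟨Nat.find hex, fun i => (Nat.find_spec hex).symm ▸ hmin i, fun i hi => ?_⟩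
  rw [Nat.find_spec hex]
  exact lt_of_le_of_ne (hmin i) (Ne.symm (Nat.find_min hex hi))

def Step.slope : Step → ℤ
  | .U => 1
  | .D => -1
  | .H => 0

def Step.reflect : Step → Step
  | .U => .D
  | .D => .U
  | .H => .H

/-- Raising a path by one unit at the point between two consecutive steps `a b` (possible
exactly when `a ≠ U` and `b ≠ D`) replaces them by `a.up b.down`. -/
def Step.up : Step → Step
  | .D => .H
  | _ => .U

def Step.down : Step → Step
  | .U => .H
  | _ => .D

/-- `(1 + x + x²)^k` is the sum of `x ^ (w.map weight).sum` over the words `w` of length `k`. -/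
def Step.weight : Step → ℕ
  | .D => 0
  | .H => 1
  | .U => 2

instance : Fintype Step :=
  ⟨{.U, .D, .H}, fun c => by cases c <;> simp⟩

theorem Step.sum_univ_s7 {M : Type*} [AddCommMonoid M] (f : Step → M) :
    ∑ c, f c = f .U + f .D + f .H := by
  simp [Finset.univ, Fintype.elems, add_assoc]

namespace Motzkin

@[simp] theorem height_nil : height [] = 0 := by simp [height]

@[simp] theorem height_cons (c : Step) (w : List Step) : height (c :: w) = c.slope + height w := by
  cases c <;> simp [height, Step.slope] <;> ring

@[simp] theorem height_append (u v : List Step) : height (u ++ v) = height u + height v := by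
  induction u with
  | nil => simp
  | cons c u ih => simp [ih, add_assoc]

theorem height_take_append (u v : List Step) (i : ℕ) :
    height ((u ++ v).take i) = height (u.take i) + height (v.take (i - u.length)) := by
  rw [List.take_append, height_append]

theorem height_take_succ {w : List Step} {i : ℕ} (hi : i < w.length) :
    height (w.take (i + 1)) = height (w.take i) + w[i].slope := by
  rw [List.take_succ_eq_append_getElem hi, height_append, height_cons, height_nil, add_zero]

theorem height_take_succ_bounds (w : List Step) (i : ℕ) :
    height (w.take i) - 1 ≤ height (w.take (i + 1)) ∧
      height (w.take (i + 1)) ≤ height (w.take i) + 1 := by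
  rcases lt_or_ge i w.length with hi | hi
  · rw [height_take_succ hi]
    cases w[i] <;> simp only [Step.slope] <;> omega
  · rw [List.take_of_length_le hi, List.take_of_length_le (by omega)]
    omega

theorem eq_of_height_take_eq {w w' : List Step} (hl : w.length = w'.length)
    (h : ∀ i, height (w.take i) = height (w'.take i)) : w = w' := by
  refine List.ext_getElem hl fun i hi hi' => ?_
  have hs : w[i].slope = w'[i].slope := by
    have := h (i + 1)
    rw [height_take_succ hi, height_take_succ hi', h i] at this
    omega
  revert hs
  cases w[i] <;> cases w'[i] <;> simp [Step.slope]

/-- The path `w`, started at level `b`, never goes below the axis. -/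
def StaysNonneg (b : ℤ) (w : List Step) : Prop :=
  ∀ i, 0 ≤ b + height (w.take i)

theorem StaysNonneg.nonneg {b : ℤ} {w : List Step} (h : StaysNonneg b w) : 0 ≤ b := by
  simpa using h 0

theorem StaysNonneg.add_height_nonneg {b : ℤ} {w : List Step} (h : StaysNonneg b w) :
    0 ≤ b + height w := by
  simpa using h w.length

theorem StaysNonneg.mono {b b' : ℤ} {w : List Step} (h : StaysNonneg b w) (hb : b ≤ b') :
    StaysNonneg b' w :=
  fun i => by linarith [h i]

@[simp] theorem staysNonneg_nil {b : ℤ} : StaysNonneg b [] ↔ 0 ≤ b := by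
  simp [StaysNonneg]

@[simp] theorem staysNonneg_cons {b : ℤ} {c : Step} {w : List Step} :
    StaysNonneg b (c :: w) ↔ 0 ≤ b ∧ StaysNonneg (b + c.slope) w := by
  refine ⟨fun h => ⟨h.nonneg, fun i => ?_⟩, fun ⟨hb, h⟩ i => ?_⟩
  · simpa [add_assoc] using h (i + 1)
  · cases i with
    | zero => simpa using hb
    | succ i => simpa [add_assoc] using h i

@[simp] theorem staysNonneg_append {b : ℤ} {u v : List Step} :
    StaysNonneg b (u ++ v) ↔ StaysNonneg b u ∧ StaysNonneg (b + height u) v := by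
  induction u generalizing b with
  | nil => simpa using fun h => h.nonneg
  | cons c u ih => simp [ih, and_assoc, add_assoc]

theorem isMotzkin_iff {n : ℕ} {w : List Step} :
    IsMotzkin n w ↔ w.length = n ∧ height w = 0 ∧ StaysNonneg 0 w := by
  simp [IsMotzkin, StaysNonneg, height, sub_eq_zero]

theorem staysNonneg_iff_of_isMotzkin {b : ℤ} {e : List Step} (he : IsMotzkin e.length e) :
    StaysNonneg b e ↔ 0 ≤ b :=
  ⟨StaysNonneg.nonneg, fun hb => (isMotzkin_iff.1 he).2.2.mono hb⟩

def mirror (w : List Step) : List Step := (w.map Step.reflect).reverse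

@[simp] theorem mirror_nil : mirror [] = [] := rfl

@[simp] theorem mirror_cons (c : Step) (w : List Step) :
    mirror (c :: w) = mirror w ++ [c.reflect] := by
  simp [mirror]

@[simp] theorem mirror_append (u v : List Step) : mirror (u ++ v) = mirror v ++ mirror u := by
  simp [mirror]

@[simp] theorem mirror_mirror (w : List Step) : mirror (mirror w) = w := by
  induction w with
  | nil => rfl
  | cons c w ih => cases c <;> simp [ih, Step.reflect]

@[simp] theorem length_mirror (w : List Step) : (mirror w).length = w.length := by
  simp [mirror]

@[simp] theorem height_mirror (w : List Step) : height (mirror w) = -height w := by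
  induction w with
  | nil => simp
  | cons c w ih => cases c <;> simp [ih, Step.reflect, Step.slope]

theorem height_take_mirror (w : List Step) (i : ℕ) :
    height ((mirror w).take i) = height (w.take (w.length - i)) - height w := by
  have hw := congrArg height (List.take_append_drop (w.length - i) w)
  rw [height_append] at hw
  simp only [mirror, List.take_reverse, List.length_map, ← List.map_drop]
  rw [← mirror, height_mirror]
  omega

theorem IsMotzkin.mirror {n : ℕ} {w : List Step} (hw : IsMotzkin n w) :
    IsMotzkin n (mirror w) := by
  obtain ⟨hl, hh, hs⟩ := isMotzkin_iff.1 hw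
  refine isMotzkin_iff.2 ⟨by simp [hl], by simp [hh], fun i => ?_⟩
  rw [height_take_mirror, hh]
  simpa using hs (w.length - i)

@[simp] theorem isMotzkin_mirror {n : ℕ} {w : List Step} :
    IsMotzkin n (mirror w) ↔ IsMotzkin n w :=
  ⟨fun h => by simpa using IsMotzkin.mirror h, IsMotzkin.mirror⟩

theorem height_take_raise {a b : Step} (ha : a ≠ .U) (hb : b ≠ .D) (u v : List Step) (i : ℕ) :
    height ((u ++ a.up :: b.down :: v).take i) =
      height ((u ++ a :: b :: v).take i) + if i = u.length + 1 then 1 else 0 := by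
  rw [height_take_append, height_take_append, add_assoc]
  congr 1
  rcases hi : i - u.length with _ | _ | j
  all_goals cases a <;> cases b <;> simp_all [Step.up, Step.down, Step.slope] <;> omega

theorem covers_of_height_take_eq {P : List Step → Prop} {w w' : List Step} (hw : P w)
    (hw' : P w') (k : ℕ)
    (h : ∀ i, height (w'.take i) = height (w.take i) + if i = k then 1 else 0) :
    Covers P w w' := by
  have hk : height (w'.take k) = height (w.take k) + 1 := by simpa using h k
  have hi : ∀ i ≠ k, height (w'.take i) = height (w.take i) := fun i hi => by simpa [hi] using h i
  have hle : PathLe w w' := fun i => by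
    by_cases hik : i = k
    · rw [hik, hk]; omega
    · rw [hi i hik]
  have hnle : ¬ PathLe w' w := fun hle' => by have := hle' k; omega
  refine ⟨hw, hw', ⟨hle, hnle⟩, fun z _ ⟨⟨hwz, hzw⟩, hzw', hw'z⟩ => ?_⟩
  have hz : ∀ i ≠ k, height (z.take i) = height (w.take i) := fun i hik => by
    have := hwz i; have := hzw' i; rw [hi i hik] at this; omega
  rcases (hwz k).lt_or_eq with hlt | heq
  · refine hw'z fun i => ?_
    by_cases hik : i = k
    · rw [hik, hk]; omega
    · rw [hi i hik, hz i hik]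
  · refine hzw fun i => ?_
    by_cases hik : i = k
    · rw [hik, heq]
    · rw [hz i hik]

theorem IsMotzkin.raise {n : ℕ} {u v : List Step} {a b : Step}
    (hw : IsMotzkin n (u ++ a :: b :: v)) (ha : a ≠ .U) (hb : b ≠ .D) :
    IsMotzkin n (u ++ a.up :: b.down :: v) := by
  obtain ⟨hl, h0, hs⟩ := isMotzkin_iff.1 hw
  refine isMotzkin_iff.2 ⟨by simpa using hl, ?_, fun i => ?_⟩
  · cases a <;> cases b <;> simp_all [Step.up, Step.down, Step.slope]
  · rw [height_take_raise ha hb]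
    have := hs i
    split_ifs <;> omega

theorem covers_raise {n : ℕ} {u v : List Step} {a b : Step}
    (hw : IsMotzkin n (u ++ a :: b :: v)) (ha : a ≠ .U) (hb : b ≠ .D) :
    Covers (IsMotzkin n) (u ++ a :: b :: v) (u ++ a.up :: b.down :: v) :=
  covers_of_height_take_eq hw (IsMotzkin.raise hw ha hb) _ (height_take_raise ha hb u v)

theorem exists_raise_le {n : ℕ} {w w' : List Step} (hw : IsMotzkin n w) (hw' : IsMotzkin n w')
    (hle : PathLe w w') (hnle : ¬ PathLe w' w) :
    ∃ u a b v, a ≠ .U ∧ b ≠ .D ∧ w = u ++ a :: b :: v ∧ PathLe (u ++ a.up :: b.down :: v) w' := by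
  obtain ⟨hl, h0, hs⟩ := isMotzkin_iff.1 hw
  obtain ⟨hl', h0', -⟩ := isMotzkin_iff.1 hw'
  obtain ⟨i, hi, hloc⟩ := exists_lt_forall_le_of_lt (f := fun i => height (w.take i))
    (g := fun i => height (w'.take i)) (fun i => by simpa using hs i) hle
    (by simpa [PathLe] using hnle)
  have hi0 : i ≠ 0 := by rintro rfl; simp at hi
  have hin : i < n := by
    by_contra
    rw [List.take_of_length_le (by omega), List.take_of_length_le (by omega), h0, h0'] at hi
    exact lt_irrefl _ hi
  obtain ⟨j, rfl⟩ : ∃ j, i = j + 1 := ⟨i - 1, by omega⟩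
  obtain ⟨u, a, b, v, rfl, rfl⟩ : ∃ u a b v, w = u ++ a :: b :: v ∧ u.length = j :=
    ⟨w.take j, w[j], w[j + 1], w.drop (j + 2),
      by rw [List.getElem_cons_drop, List.getElem_cons_drop, List.take_append_drop], by simp; omega⟩
  have hstep := height_take_succ_bounds w'
  have ha := hloc u.length (hstep _).2
  have hb := hloc (u.length + 2) (by
    have := (hstep (u.length + 1)).1
    rw [show u.length + 1 + 1 = u.length + 2 from rfl] at this
    omega)
  simp [List.take_length_add_append] at ha hb
  replace ha : a ≠ .U := by rintro rfl; simp [Step.slope] at ha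
  replace hb : b ≠ .D := by rintro rfl; simp [Step.slope] at hb
  refine ⟨u, a, b, v, ha, hb, rfl, fun k => ?_⟩
  rw [height_take_raise ha hb]
  have := hle k
  split_ifs with hk
  · subst hk; omega
  · omega

theorem exists_raise_of_covers {n : ℕ} {w w' : List Step} (hc : Covers (IsMotzkin n) w w') :
    ∃ u a b v, a ≠ .U ∧ b ≠ .D ∧ w = u ++ a :: b :: v ∧ w' = u ++ a.up :: b.down :: v := by
  obtain ⟨hw, hw', ⟨hle, hnle⟩, hmin⟩ := hc
  obtain ⟨u, a, b, v, ha, hb, rfl, hzw'⟩ := exists_raise_le hw hw' hle hnle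
  refine ⟨u, a, b, v, ha, hb, rfl, ?_⟩
  have hcov := covers_raise hw ha hb
  have hw'z : PathLe w' (u ++ a.up :: b.down :: v) := by
    by_contra h
    exact hmin _ hcov.2.1 ⟨hcov.2.2.1, hzw', h⟩
  have hl : (u ++ a.up :: b.down :: v).length = w'.length := by
    rw [(isMotzkin_iff.1 hw').1, ← (isMotzkin_iff.1 hw).1]
    simp
  exact (eq_of_height_take_eq hl fun k => le_antisymm (hzw' k) (hw'z k)).symm

theorem eq_of_raise_eq {u v u' v' : List Step} {a b a' b' : Step} (ha : a ≠ .U) (hb : b ≠ .D)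
    (ha' : a' ≠ .U) (hb' : b' ≠ .D) (h : u ++ a :: b :: v = u' ++ a' :: b' :: v')
    (h' : u ++ a.up :: b.down :: v = u' ++ a'.up :: b'.down :: v') :
    u = u' ∧ a = a' ∧ b = b' ∧ v = v' := by
  have hlen : u.length = u'.length := by
    have e := height_take_raise ha' hb' u' v' (u.length + 1)
    rw [← h, ← h', height_take_raise ha hb] at e
    split_ifs at e <;> omega
  obtain ⟨rfl, h2⟩ := List.append_inj h hlen
  simp_all

def occurrences (n : ℕ) (f : List Step) : Set (List Step × List Step) :=
  {p | IsMotzkin n (p.1 ++ f ++ p.2)}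

theorem occurrences_finite (n : ℕ) (f : List Step) : (occurrences n f).Finite := by
  refine ((List.finite_length_le Step n).prod (List.finite_length_le Step n)).subset fun p hp => ?_
  have := hp.1
  simp only [List.length_append] at this
  exact ⟨by simp; omega, by simp; omega⟩

theorem motzkinEdges_eq_sum_ncard (n : ℕ) :
    motzkinEdges n =
      ∑ ab : Step × Step, {p | ab.1 ≠ .U ∧ ab.2 ≠ .D ∧ p ∈ occurrences n [ab.1, ab.2]}.ncard := by
  rw [← ncard_setOf_snd_mem_eq_sum _ fun ab => (occurrences_finite n _).subset fun p hp => hp.2.2]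
  symm
  refine Set.ncard_congr (fun q _ => (q.2.1 ++ q.1.1 :: q.1.2 :: q.2.2,
    q.2.1 ++ q.1.1.up :: q.1.2.down :: q.2.2)) ?_ ?_ ?_
  · rintro ⟨⟨a, b⟩, u, v⟩ ⟨ha, hb, hw⟩
    exact covers_raise (by simpa [occurrences] using hw) ha hb
  · rintro ⟨⟨a, b⟩, u, v⟩ ⟨⟨a', b'⟩, u', v'⟩ ⟨ha, hb, -⟩ ⟨ha', hb', -⟩ h
    obtain ⟨h1, h2⟩ := Prod.mk.inj h
    obtain ⟨rfl, rfl, rfl, rfl⟩ := eq_of_raise_eq ha hb ha' hb' h1 h2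
    rfl
  · rintro ⟨w, w'⟩ hc
    obtain ⟨u, a, b, v, ha, hb, rfl, rfl⟩ := exists_raise_of_covers hc
    exact ⟨((a, b), u, v), ⟨ha, hb, by simpa [occurrences] using hc.1⟩, rfl⟩

theorem motzkinEdges_eq_sum (n : ℕ) :
    motzkinEdges n = (occurrences n [.D, .U]).ncard + (occurrences n [.D, .H]).ncard +
      (occurrences n [.H, .U]).ncard + (occurrences n [.H, .H]).ncard := by
  simp [motzkinEdges_eq_sum_ncard, Fintype.sum_prod_type, Step.sum_univ_s7, add_assoc]

theorem occurrences_eq_of_staysNonneg {n : ℕ} {f g : List Step} (hf : StaysNonneg 0 f)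
    (hg : StaysNonneg 0 g) (hl : f.length = g.length) (hh : height f = height g) :
    occurrences n f = occurrences n g := by
  have key : ∀ {e u : List Step}, StaysNonneg 0 e → StaysNonneg 0 u → StaysNonneg (height u) e :=
    fun he hu => he.mono (by simpa using hu.add_height_nonneg)
  ext ⟨u, v⟩
  simp only [occurrences, Set.mem_ofPred_eq, isMotzkin_iff, List.length_append, hl, height_append,
    hh, staysNonneg_append, zero_add]
  constructor <;> rintro ⟨h1, h2, ⟨h3, -⟩, h5⟩ <;> exact ⟨h1, h2, ⟨h3, key ‹_› h3⟩, h5⟩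

theorem occurrences_succ_down_horizontal (n : ℕ) :
    occurrences (n + 1) [.D, .H] = occurrences n [.D] := by
  ext ⟨u, v⟩
  simp only [occurrences, Set.mem_ofPred_eq, isMotzkin_iff]
  simp [Step.slope]
  constructor
  · rintro ⟨h1, h2, h3, h4, -, h6⟩
    exact ⟨by omega, h2, h3, h4, h6⟩
  · rintro ⟨h1, h2, h3, h4, h6⟩
    exact ⟨by omega, h2, h3, h4, by linarith [h6.nonneg], h6⟩

theorem ncard_occurrences_mirror (n : ℕ) (f : List Step) :
    (occurrences n (mirror f)).ncard = (occurrences n f).ncard := by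
  refine Set.ncard_congr (fun p _ => (mirror p.2, mirror p.1)) ?_ ?_ ?_
  · rintro ⟨u, v⟩ h
    simpa [occurrences, List.append_assoc] using IsMotzkin.mirror h
  · rintro ⟨u, v⟩ ⟨u', v'⟩ - - h
    simpa using congrArg (fun p => (mirror p.2, mirror p.1)) h
  · rintro ⟨u, v⟩ h
    refine ⟨(mirror v, mirror u), ?_, by simp⟩
    simpa [occurrences, List.append_assoc] using IsMotzkin.mirror h

theorem ncard_occurrences_eq_sum {n : ℕ} {f : List Step} (hf : ∀ u, (u, []) ∉ occurrences n f) :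
    (occurrences n f).ncard = ∑ c, (occurrences n (f ++ [c])).ncard := by
  rw [← ncard_setOf_snd_mem_eq_sum _ fun c => occurrences_finite n _]
  symm
  refine Set.ncard_congr (fun q _ => (q.2.1, q.1 :: q.2.2)) ?_ ?_ ?_
  · rintro ⟨c, u, v⟩ h
    simpa [occurrences] using h
  · rintro ⟨c, u, v⟩ ⟨c', u', v'⟩ - - h
    simp_all
  · rintro ⟨u, _ | ⟨c, v⟩⟩ h
    · exact absurd h (hf u)
    · exact ⟨(c, u, v), by simpa [occurrences] using h, rfl⟩

theorem ncard_occurrences_up_eq_sum (n : ℕ) :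
    (occurrences n [.U]).ncard = (occurrences n [.U, .U]).ncard +
      (occurrences n [.U, .D]).ncard + (occurrences n [.U, .H]).ncard := by
  rw [ncard_occurrences_eq_sum, Step.sum_univ_s7]
  · rfl
  · intro u h
    obtain ⟨-, h0, hs⟩ := isMotzkin_iff.1 h
    simp only [List.append_nil, staysNonneg_append] at hs
    have := hs.1.add_height_nonneg
    simp [Step.slope] at h0 this
    omega

theorem exists_eq_isMotzkin_append_down {y : List Step} (hy : ∃ i, height (y.take i) < 0) :
    ∃ e y', IsMotzkin e.length e ∧ y = e ++ .D :: y' := by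
  classical
  have hk := Nat.find_spec hy
  have hbefore : ∀ i < Nat.find hy, 0 ≤ height (y.take i) := fun i hi =>
    not_lt.1 (Nat.find_min hy hi)
  obtain ⟨j, hj⟩ : ∃ j, Nat.find hy = j + 1 := Nat.exists_eq_succ_of_ne_zero fun h => by
    rw [h] at hk; simp at hk
  rw [hj] at hk hbefore
  have h0 := hbefore j (by omega)
  have hjlen : j < y.length := by
    by_contra h
    rw [List.take_of_length_le (by omega)] at hk
    rw [List.take_of_length_le (by omega)] at h0
    omega
  rw [height_take_succ hjlen] at hk
  have hD : y[j] = .D := by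
    revert hk; cases y[j] <;> simp [Step.slope] <;> omega
  refine ⟨y.take j, y.drop (j + 1), isMotzkin_iff.2 ⟨rfl, ?_, fun i => ?_⟩, ?_⟩
  · rw [hD] at hk; simp [Step.slope] at hk; omega
  · rw [List.take_take, zero_add]
    exact hbefore _ (by omega)
  · rw [← hD, List.getElem_cons_drop, List.take_append_drop]

theorem eq_of_isMotzkin_append_down_eq {e e' y y' : List Step} (he : IsMotzkin e.length e)
    (he' : IsMotzkin e'.length e') (h : e ++ .D :: y = e' ++ .D :: y') : e = e' ∧ y = y' := by
  have key : ∀ {e e' y y' : List Step}, IsMotzkin e.length e → IsMotzkin e'.length e' →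
      e ++ .D :: y = e' ++ .D :: y' → e.length ≤ e'.length := by
    intro e e' y y' he he' h
    by_contra hlt
    have := congrArg (fun w => height (w.take (e'.length + 1))) h
    simp only [List.take_append_of_le_length (show e'.length + 1 ≤ e.length by omega),
      List.take_length_add_append] at this
    have hs := (isMotzkin_iff.1 he).2.2 (e'.length + 1)
    have h0 := (isMotzkin_iff.1 he').2.1
    simp [Step.slope, h0] at this
    omega
  obtain ⟨rfl, h2⟩ := List.append_inj h (le_antisymm (key he he' h) (key he' he h.symm))
  simpa using h2

theorem exists_eq_append_up_isMotzkin {u : List Step} (hu : 0 < height u) :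
    ∃ x e, IsMotzkin e.length e ∧ u = x ++ .U :: e := by
  obtain ⟨e, y, he, h⟩ := exists_eq_isMotzkin_append_down (y := mirror u)
    ⟨u.length, by rw [List.take_of_length_le (by simp), height_mirror]; omega⟩
  refine ⟨mirror y, mirror e, by simpa using he, ?_⟩
  simpa [Step.reflect] using congrArg mirror h

theorem eq_of_append_up_isMotzkin_eq {x x' e e' : List Step} (he : IsMotzkin e.length e)
    (he' : IsMotzkin e'.length e') (h : x ++ .U :: e = x' ++ .U :: e') : x = x' ∧ e = e' := by
  have := congrArg mirror h
  simp only [mirror_append, mirror_cons, List.append_assoc] at this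
  obtain ⟨h1, h2⟩ := eq_of_isMotzkin_append_down_eq (e := mirror e) (e' := mirror e')
    (by simpa using he) (by simpa using he') (by simpa [Step.reflect] using this)
  exact ⟨by simpa using congrArg mirror h2, by simpa using congrArg mirror h1⟩

def valleySplits (n : ℕ) : Set (List Step × List Step × List Step) :=
  {t | IsMotzkin t.2.1.length t.2.1 ∧ IsMotzkin n (t.1 ++ .U :: t.2.1 ++ .D :: .U :: t.2.2)}

theorem isMotzkin_valley_iff {n : ℕ} {x e v : List Step} (he : IsMotzkin e.length e) :
    IsMotzkin n (x ++ .U :: e ++ .D :: .U :: v) ↔ IsMotzkin n (x ++ .U :: .U :: e ++ .D :: v) := by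
  simp [isMotzkin_iff, staysNonneg_iff_of_isMotzkin he, (isMotzkin_iff.1 he).2.1, Step.slope]
  constructor <;> rintro ⟨h1, h2, h3, h4, -, -, h7⟩ <;>
    exact ⟨by omega, h2, h3, h4, by omega, by omega, h7⟩

theorem ncard_occurrences_down_up (n : ℕ) :
    (occurrences n [.D, .U]).ncard = (valleySplits n).ncard := by
  symm
  refine Set.ncard_congr (fun t _ => (t.1 ++ .U :: t.2.1, t.2.2)) ?_ ?_ ?_
  · rintro ⟨x, e, v⟩ ⟨-, h⟩
    simpa [occurrences] using h
  · rintro ⟨x, e, v⟩ ⟨x', e', v'⟩ ⟨he, -⟩ ⟨he', -⟩ h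
    obtain ⟨h1, rfl⟩ := Prod.mk.inj h
    obtain ⟨rfl, rfl⟩ := eq_of_append_up_isMotzkin_eq he he' h1
    rfl
  · rintro ⟨u, v⟩ h
    have hu : 0 < height u := by
      obtain ⟨-, -, -, -, hu, -⟩ : _ ∧ _ ∧ _ ∧ _ ∧ 1 ≤ height u ∧ _ := by
        simpa [occurrences, isMotzkin_iff, Step.slope] using h
      omega
    obtain ⟨x, e, he, rfl⟩ := exists_eq_append_up_isMotzkin hu
    exact ⟨(x, e, v), ⟨he, by simpa [occurrences] using h⟩, rfl⟩

theorem ncard_occurrences_up_up (n : ℕ) :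
    (occurrences n [.U, .U]).ncard = (valleySplits n).ncard := by
  symm
  refine Set.ncard_congr (fun t _ => (t.1, t.2.1 ++ .D :: t.2.2)) ?_ ?_ ?_
  · rintro ⟨x, e, v⟩ ⟨he, h⟩
    simpa [occurrences] using (isMotzkin_valley_iff he).1 h
  · rintro ⟨x, e, v⟩ ⟨x', e', v'⟩ ⟨he, -⟩ ⟨he', -⟩ h
    obtain ⟨rfl, h2⟩ := Prod.mk.inj h
    obtain ⟨rfl, rfl⟩ := eq_of_isMotzkin_append_down_eq he he' h2
    rfl
  · rintro ⟨x, y⟩ h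
    have hy : height (y.take y.length) < 0 := by
      obtain ⟨-, h0, -, hx, -⟩ :
          _ ∧ height x + (1 + (1 + height y)) = 0 ∧ _ ∧ 0 ≤ height x ∧ _ := by
        simpa [occurrences, isMotzkin_iff, Step.slope] using h
      rw [List.take_length]
      omega
    obtain ⟨e, v, he, rfl⟩ := exists_eq_isMotzkin_append_down ⟨_, hy⟩
    exact ⟨(x, e, v), ⟨he, (isMotzkin_valley_iff he).2 (by simpa [occurrences] using h)⟩, rfl⟩

theorem isFirstMin_rotate {n : ℕ} {u v : List Step} (h : (u, v) ∈ occurrences n [.U]) :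
    IsFirstMin (fun i => height ((v ++ .D :: u).take i)) (v.length + 1) := by
  obtain ⟨-, h0, hu, hu0, hv⟩ : _ ∧ height u + (1 + height v) = 0 ∧ StaysNonneg 0 u ∧
      0 ≤ height u ∧ StaysNonneg (height u + 1) v := by
    simpa [occurrences, isMotzkin_iff, Step.slope] using h
  have hz : StaysNonneg (height u + 2) (v ++ .D :: u) := by
    simp only [staysNonneg_append, staysNonneg_cons]
    refine ⟨hv.mono (by omega), by omega, hu.mono ?_⟩
    simp [Step.slope]; omega
  refine ⟨fun i => ?_, fun i hi => ?_⟩ <;> dsimp only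
  · have := hz i
    simp [List.take_length_add_append, Step.slope]
    omega
  · have := hv i
    rw [List.take_append_of_le_length (show i ≤ v.length by omega)]
    simp [List.take_length_add_append, Step.slope]
    omega

theorem exists_eq_append_down_isFirstMin {z : List Step} (hz : height z < 0) :
    ∃ v u, z = v ++ .D :: u ∧ IsFirstMin (fun i => height (z.take i)) (v.length + 1) := by
  obtain ⟨k, hk⟩ := exists_isFirstMin (f := fun i => height (z.take i)) z.length
    fun i hi => by simp [List.take_of_length_le hi]
  obtain ⟨j, rfl⟩ : ∃ j, k = j + 1 := Nat.exists_eq_succ_of_ne_zero fun h0 => by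
    have := hk.1 z.length
    simp [h0] at this
    omega
  have hj : j < z.length := by
    by_contra h
    have := hk.2 j (by omega)
    simp [List.take_of_length_le (show z.length ≤ j by omega),
      List.take_of_length_le (show z.length ≤ j + 1 by omega)] at this
  obtain ⟨v, c, u, rfl, rfl⟩ : ∃ v c u, z = v ++ c :: u ∧ v.length = j :=
    ⟨z.take j, z[j], z.drop (j + 1), by rw [List.getElem_cons_drop, List.take_append_drop],
      by simp; omega⟩
  refine ⟨v, u, ?_, hk⟩
  have := hk.2 v.length (by omega)
  simp only [List.take_length_add_append] at this
  revert this
  cases c <;> simp [Step.slope]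

theorem mem_occurrences_of_isFirstMin {u v : List Step} (hz : height (v ++ .D :: u) = -2)
    (h : IsFirstMin (fun i => height ((v ++ .D :: u).take i)) (v.length + 1)) :
    (u, v) ∈ occurrences (v ++ .D :: u).length [.U] := by
  obtain ⟨hmin, hfirst⟩ := h
  simp only [List.take_length_add_append] at hmin hfirst
  have hz' : StaysNonneg (1 - height v) (v ++ .D :: u) := fun i => by
    have := hmin i
    simp [Step.slope] at this
    omega
  have hv : StaysNonneg (-height v) v := fun i => by
    rcases le_or_gt i v.length with hi | hi
    · have := hfirst i (by omega)
      rw [List.take_append_of_le_length hi] at this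
      simp [Step.slope] at this
      omega
    · rw [List.take_of_length_le hi.le]
      omega
  simp only [staysNonneg_append, staysNonneg_cons] at hz'
  have hu : StaysNonneg 0 u := hz'.2.2.mono (by rw [show Step.D.slope = -1 from rfl]; omega)
  simp [Step.slope] at hz
  simp [occurrences, isMotzkin_iff, Step.slope]
  exact ⟨by omega, by omega, hu, by simpa using hu.add_height_nonneg, hv.mono (by omega)⟩

theorem ncard_occurrences_up (n : ℕ) :
    (occurrences n [.U]).ncard = {z : List Step | z.length = n ∧ height z = -2}.ncard := by
  refine Set.ncard_congr (fun p _ => p.2 ++ .D :: p.1) ?_ ?_ ?_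
  · rintro ⟨u, v⟩ h
    obtain ⟨hl, h0, -⟩ : u.length + (v.length + 1) = n ∧ height u + (1 + height v) = 0 ∧ _ := by
      simpa [occurrences, isMotzkin_iff, Step.slope] using h
    simp [Step.slope]
    omega
  · rintro ⟨u, v⟩ ⟨u', v'⟩ h h' heq
    simp only at heq
    have hlen : v.length + 1 = v'.length + 1 :=
      (isFirstMin_rotate h).unique (by simpa [heq] using isFirstMin_rotate h')
    obtain ⟨rfl, h2⟩ := List.append_inj heq (by omega)
    simp_all
  · rintro z ⟨rfl, hz⟩
    obtain ⟨v, u, rfl, h⟩ := exists_eq_append_down_isFirstMin (z := z) (by omega)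
    exact ⟨(u, v), mem_occurrences_of_isFirstMin hz h, rfl⟩

theorem motzkinEdges_succ (n : ℕ) :
    motzkinEdges (n + 1) = (occurrences (n + 1) [.U]).ncard + (occurrences n [.U]).ncard := by
  have hHU : occurrences (n + 1) [.H, .U] = occurrences (n + 1) [.U, .H] :=
    occurrences_eq_of_staysNonneg (by simp [Step.slope]) (by simp [Step.slope]) rfl rfl
  have hHH : occurrences (n + 1) [.H, .H] = occurrences (n + 1) [.U, .D] :=
    occurrences_eq_of_staysNonneg (by simp [Step.slope]) (by simp [Step.slope]) rfl rfl
  have hD : (occurrences n [.D]).ncard = (occurrences n [.U]).ncard :=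
    ncard_occurrences_mirror n [.U]
  rw [motzkinEdges_eq_sum, ncard_occurrences_down_up, ← ncard_occurrences_up_up,
    occurrences_succ_down_horizontal, hD, hHU, hHH, ncard_occurrences_up_eq_sum (n + 1)]
  ring

open Polynomial

theorem sum_map_weight (z : List Step) : ((z.map Step.weight).sum : ℤ) = height z + z.length := by
  induction z with
  | nil => simp
  | cons c z ih => cases c <;> simp [Step.weight, Step.slope, ih] <;> ring

theorem coeff_trinomial_pow (k t : ℕ) :
    (((1 : ℕ[X]) + X + X ^ 2) ^ k).coeff t =
      {z : List Step | z.length = k ∧ (z.map Step.weight).sum = t}.ncard := by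
  classical
  have hT : (1 : ℕ[X]) + X + X ^ 2 = ∑ c : Step, X ^ c.weight := by
    simp [Step.sum_univ_s7, Step.weight]
    ring
  rw [hT, ← Fin.prod_const, Finset.prod_univ_sum, Fintype.piFinset_univ]
  simp only [Finset.prod_pow_eq_pow_sum, finsetSum_coeff, coeff_X_pow, Finset.sum_boole]
  rw [Nat.cast_id, ← Set.ncard_coe_finset, Finset.coe_filter_univ]
  refine Set.ncard_congr (fun x _ => List.ofFn x) ?_ ?_ ?_
  · intro x (hx : t = _)
    simp [List.map_ofFn, List.sum_ofFn, hx]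
  · intro x y _ _ h
    exact List.ofFn_injective h
  · rintro z ⟨rfl, hz⟩
    exact ⟨fun i => z[i], by simp [← hz, ← List.sum_ofFn], List.ofFn_getElem⟩

theorem ncard_height_eq_neg_two {k : ℕ} (hk : 2 ≤ k) :
    {z : List Step | z.length = k ∧ height z = -2}.ncard =
      (((1 : ℕ[X]) + X + X ^ 2) ^ k).coeff (k - 2) := by
  rw [coeff_trinomial_pow]
  congr 1
  ext z
  have := sum_map_weight z
  constructor <;> rintro ⟨hl, h⟩ <;> exact ⟨hl, by omega⟩

end Motzkin

/-- For `n ≥ 3`, the number of edges of the Hasse diagram of the Motzkin lattice `M_n`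
equals the coefficient of `x^(n-2)` in `(1+x+x²)^n` plus the coefficient of `x^(n-3)`
in `(1+x+x²)^(n-1)`. -/
theorem motzkinEdges_eq_trinomials (n : ℕ) (hn : 3 ≤ n) :
    motzkinEdges n =
      (((1 : Polynomial ℕ) + Polynomial.X + Polynomial.X ^ 2) ^ n).coeff (n - 2) +
        (((1 : Polynomial ℕ) + Polynomial.X + Polynomial.X ^ 2) ^ (n - 1)).coeff (n - 3) := by
  obtain ⟨m, rfl⟩ : ∃ m, n = m + 1 := ⟨n - 1, by omega⟩
  rw [Motzkin.motzkinEdges_succ, Motzkin.ncard_occurrences_up, Motzkin.ncard_occurrences_up,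
    Motzkin.ncard_height_eq_neg_two (by omega), Motzkin.ncard_height_eq_neg_two (by omega),
    Nat.add_sub_cancel, show m + 1 - 3 = m - 2 by omega]
end
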